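/- A map ε : X×X∖Δ → P(M) is a Fitch map if and only if (1) the collection N[ε] of complementary neighborhoods is hierarchy-like, and (2) for every neighborhood N = N_{¬m}[y] ∈ N[ε] and every y' ∈ N one has |N_{¬m}[y']| ≤ |N|. -/

import Mathlib

/-- A finite rooted phylogenetic tree on leaf set `X`, with vertex type `V`.
Vertices are encoded via a parent function; `par root = root`. -/
structure PhyloTree (V X : Type) : Type where
  fin : Finite V
  root : V
  par : V → V
  par_root : par root = root
  reach : ∀ v : V, ∃ n : ℕ, par^[n] v = root
  leaf : X → V
  leaf_inj : Function.Injective leaf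
  leaf_isLeaf : ∀ (x : X) (u : V), par u = leaf x → u = leaf x
  leaf_only : ∀ v : V, (∀ u : V, par u = v → u = v) → ∃ x : X, leaf x = v
  root_deg : (∃ x : X, leaf x = root) ∨ 2 ≤ {u : V | par u = root ∧ u ≠ root}.ncard
  inner_deg : ∀ v : V, v ≠ root → (¬ ∃ x : X, leaf x = v) →
      2 ≤ {u : V | par u = v ∧ u ≠ v}.ncard

namespace PhyloTree

variable {V X : Type}

/-- `T.anc u v` : `u` is an ancestor of `v`, i.e. `u ⪯_T v`. -/
def anc (T : PhyloTree V X) (u v : V) : Prop := ∃ n : ℕ, T.par^[n] v = u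

/-- `l` is the last common ancestor of `a` and `b`. -/
def IsLca (T : PhyloTree V X) (l a b : V) : Prop :=
  T.anc l a ∧ T.anc l b ∧ ∀ u : V, T.anc u a → T.anc u b → T.anc u l

/-- The cluster of `v`: the set of leaves below `v`. -/
def cluster (T : PhyloTree V X) (v : V) : Set X := {x : X | T.anc v (T.leaf x)}

/-- The cluster set `C(T)`. -/
def clusterSet (T : PhyloTree V X) : Set (Set X) := {S : Set X | ∃ v : V, S = T.cluster v}

/-- The edge `(par u, u)` lies on the descending path from `a` down to `b`. -/
def edgeOnDown (T : PhyloTree V X) (a b u : V) : Prop :=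
  T.anc a u ∧ u ≠ a ∧ T.anc u b

/-- The edge `(par u, u)` lies on the unique path between `v` and `w`. -/
def edgeOnPath (T : PhyloTree V X) (v w u : V) : Prop :=
  ∃ l : V, T.IsLca l v w ∧ (T.edgeOnDown l v u ∨ T.edgeOnDown l w u)

/-- `T` displays the rooted triple `ab|c`. -/
def Displays (T : PhyloTree V X) (a b c : X) : Prop :=
  ∃ l3 l2 : V, T.IsLca l2 (T.leaf a) (T.leaf b) ∧
    T.IsLca l3 l2 (T.leaf c) ∧ l3 ≠ l2

end PhyloTree

/-- `(T, lab)` explains `ε` : for distinct leaves `x,y`, `m ∈ ε x y` iff there is an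
`m`-edge on the path from `lca(x,y)` down to `y`. -/
def Explains {V X M : Type} (T : PhyloTree V X) (lab : V → Set M)
    (ε : X → X → Set M) : Prop :=
  ∀ x y : X, x ≠ y → ∀ m : M,
    (m ∈ ε x y ↔ ∃ l : V, T.IsLca l (T.leaf x) (T.leaf y) ∧
      ∃ u : V, T.edgeOnDown l (T.leaf y) u ∧ m ∈ lab u)

/-- `ε` is a Fitch map: it is explained by some edge-labeled phylogenetic tree. -/
def IsFitchMap {X M : Type} (ε : X → X → Set M) : Prop :=
  ∃ (V : Type) (T : PhyloTree V X) (lab : V → Set M), Explains T lab ε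

/-- The complementary neighborhood `N_{¬m}[y]`. -/
def Nbr {X M : Type} (ε : X → X → Set M) (m : M) (y : X) : Set X :=
  {x : X | x ≠ y ∧ m ∉ ε x y} ∪ {y}

/-- The collection `N[ε]` of all complementary neighborhoods. -/
def NbrSet {X M : Type} (ε : X → X → Set M) : Set (Set X) :=
  {N : Set X | ∃ (m : M) (y : X), N = Nbr ε m y}

/-- A set system is hierarchy-like if any two members intersect in `∅` or one of them. -/
def HLike {X : Type} (H : Set (Set X)) : Prop :=
  ∀ P ∈ H, ∀ Q ∈ H, P ∩ Q = P ∨ P ∩ Q = Q ∨ P ∩ Q = ∅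

/-- The inequality condition (IC). -/
def IneqCond {X M : Type} (ε : X → X → Set M) : Prop :=
  ∀ (m : M) (y y' : X), y' ∈ Nbr ε m y → (Nbr ε m y').ncard ≤ (Nbr ε m y).ncard

/-!
In a tree explaining `ε`, the neighborhood `N_{¬m}[y]` is the cluster of the highest ancestor `v`
of `y` such that no edge on the path from `v` down to `y` carries `m`. Clusters form a hierarchy,
which gives (HLC); and for `y' ∈ N_{¬m}[y]` the corresponding vertex of `y'` lies below `v`, so
`N_{¬m}[y'] ⊆ N_{¬m}[y]`, which gives (IC).

Conversely, under (HLC) the inequality (IC) upgrades to the same inclusion. The complementary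
neighborhoods together with `X` and the singletons form a hierarchy, whose Hasse diagram is a
phylogenetic tree with exactly these clusters; labelling the edge above each cluster by the `m`
for which it is some `N_{¬m}[z]` explains `ε`.
-/

namespace HLike

variable {X : Type} {H H' : Set (Set X)}

theorem mono (h : HLike H) (hsub : H' ⊆ H) : HLike H' :=
  fun P hP Q hQ => h P (hsub hP) Q (hsub hQ)

theorem subset_or_subset (h : HLike H) {P Q : Set X} (hP : P ∈ H) (hQ : Q ∈ H) {z : X}
    (hzP : z ∈ P) (hzQ : z ∈ Q) : P ⊆ Q ∨ Q ⊆ P := by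
  rcases h P hP Q hQ with h | h | h
  · exact Or.inl (Set.inter_eq_left.mp h)
  · exact Or.inr (Set.inter_eq_right.mp h)
  · exact absurd (h ▸ Set.mem_inter hzP hzQ) (Set.notMem_empty z)

theorem union_of_forall {S : Set (Set X)} (h : HLike H)
    (hS : ∀ P ∈ S, ∀ Q : Set X, P ∩ Q = P ∨ P ∩ Q = Q ∨ P ∩ Q = ∅) : HLike (S ∪ H) := by
  rintro P (hP | hP) Q (hQ | hQ)
  · exact hS P hP Q
  · exact hS P hP Q
  · rw [Set.inter_comm P Q]
    rcases hS Q hQ P with h | h | h <;> simp only [h, true_or, or_true]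
  · exact h P hP Q hQ

end HLike

namespace PhyloTree

open Function

variable {V X M : Type} (T : PhyloTree V X)

theorem anc_refl (v : V) : T.anc v v := ⟨0, rfl⟩

theorem anc_trans {u v w : V} (huv : T.anc u v) (hvw : T.anc v w) : T.anc u w := by
  obtain ⟨i, rfl⟩ := huv
  obtain ⟨j, rfl⟩ := hvw
  exact ⟨i + j, iterate_add_apply _ _ _ _⟩

theorem iterate_eq_root_of_le {v : V} {n k : ℕ} (hn : T.par^[n] v = T.root) (hk : n ≤ k) :
    T.par^[k] v = T.root := by
  rw [← Nat.sub_add_cancel hk, iterate_add_apply, hn, iterate_fixed T.par_root]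

theorem eq_root_of_isPeriodicPt {v : V} {p : ℕ} (hp : 0 < p) (hv : IsPeriodicPt T.par p v) :
    v = T.root := by
  obtain ⟨n, hn⟩ := T.reach v
  rw [← (hv.mul_const n).eq]
  exact T.iterate_eq_root_of_le hn (Nat.le_mul_of_pos_left n hp)

theorem anc_antisymm {u v : V} (huv : T.anc u v) (hvu : T.anc v u) : u = v := by
  obtain ⟨i, rfl⟩ := huv
  obtain ⟨j, hj⟩ := hvu
  rcases Nat.eq_zero_or_pos (j + i) with h | h
  · rw [Nat.eq_zero_of_add_eq_zero_left h, iterate_zero_apply]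
  · have hper : IsPeriodicPt T.par (j + i) v := by
      rwa [IsPeriodicPt, IsFixedPt, iterate_add_apply]
    rw [T.eq_root_of_isPeriodicPt h hper, iterate_fixed T.par_root]

theorem anc_total {u v w : V} (hu : T.anc u w) (hv : T.anc v w) : T.anc u v ∨ T.anc v u := by
  obtain ⟨i, rfl⟩ := hu
  obtain ⟨j, rfl⟩ := hv
  rcases le_total i j with h | h
  · exact Or.inr ⟨j - i, by rw [← iterate_add_apply, Nat.sub_add_cancel h]⟩
  · exact Or.inl ⟨i - j, by rw [← iterate_add_apply, Nat.sub_add_cancel h]⟩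

theorem exists_isLca (a b : V) : ∃ l, T.IsLca l a b := by
  classical
  have hex : ∃ k, T.anc (T.par^[k] a) b := by
    obtain ⟨n, hn⟩ := T.reach a
    exact ⟨n, hn ▸ T.reach b⟩
  refine ⟨T.par^[Nat.find hex] a, ⟨_, rfl⟩, Nat.find_spec hex, ?_⟩
  rintro u ⟨j, rfl⟩ hub
  refine ⟨j - Nat.find hex, ?_⟩
  rw [← iterate_add_apply, Nat.sub_add_cancel (Nat.find_min' hex hub)]

theorem IsLca.unique {l l' a b : V} (hl : T.IsLca l a b) (hl' : T.IsLca l' a b) : l = l' :=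
  T.anc_antisymm (hl'.2.2 l hl.1 hl.2.1) (hl.2.2 l' hl'.1 hl'.2.1)

theorem cluster_subset_cluster {u v : V} (h : T.anc u v) : T.cluster v ⊆ T.cluster u :=
  fun _ hx => T.anc_trans h hx

theorem hLike_clusterSet : HLike T.clusterSet := by
  rintro _ ⟨u, rfl⟩ _ ⟨v, rfl⟩
  rcases Set.eq_empty_or_nonempty (T.cluster u ∩ T.cluster v) with h | ⟨z, hzu, hzv⟩
  · exact Or.inr (Or.inr h)
  · rcases T.anc_total hzu hzv with h | h
    · exact Or.inr (Or.inl (Set.inter_eq_right.mpr (T.cluster_subset_cluster h)))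
    · exact Or.inl (Set.inter_eq_left.mpr (T.cluster_subset_cluster h))

theorem edgeOnDown_mono {a a' b b' u : V} (h : T.edgeOnDown a' b' u) (ha : T.anc a a')
    (hb : T.anc b' b) : T.edgeOnDown a b u := by
  obtain ⟨ha'u, hua', hub'⟩ := h
  refine ⟨T.anc_trans ha ha'u, ?_, T.anc_trans hub' hb⟩
  rintro rfl
  exact hua' (T.anc_antisymm ha'u ha).symm

def PathAvoids (lab : V → Set M) (m : M) (a b : V) : Prop :=
  ∀ u, T.edgeOnDown a b u → m ∉ lab u

variable {T} {lab : V → Set M} {m : M}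

theorem pathAvoids_self (a : V) : T.PathAvoids lab m a a :=
  fun _ ⟨hau, hua, hua'⟩ => (hua (T.anc_antisymm hua' hau)).elim

theorem PathAvoids.mono {a a' b b' : V} (h : T.PathAvoids lab m a b) (ha : T.anc a a')
    (hb : T.anc b' b) : T.PathAvoids lab m a' b' :=
  fun u hu => h u (T.edgeOnDown_mono hu ha hb)

theorem PathAvoids.trans {a b c : V} (hab : T.PathAvoids lab m a b)
    (hbc : T.PathAvoids lab m b c) (hb : T.anc b c) :
    T.PathAvoids lab m a c := by
  rintro u ⟨hau, hua, huc⟩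
  by_cases hub : T.anc u b
  · exact hab u ⟨hau, hua, hub⟩
  · have hbu := (T.anc_total hb huc).resolve_right hub
    exact hbc u ⟨hbu, fun h => hub (h ▸ T.anc_refl u), huc⟩

theorem exists_iterate_le_of_anc {w b : V} {n : ℕ} (hn : T.par^[n] b = T.root)
    (hw : T.anc w b) : ∃ k ≤ n, T.par^[k] b = w := by
  obtain ⟨k, rfl⟩ := hw
  rcases le_total k n with h | h
  · exact ⟨k, h, rfl⟩
  · exact ⟨n, le_rfl, by rw [hn, T.iterate_eq_root_of_le hn h]⟩

theorem exists_top_pathAvoids (lab : V → Set M) (m : M) (b : V) :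
    ∃ v, T.anc v b ∧ T.PathAvoids lab m v b ∧
      ∀ w, T.anc w b → T.PathAvoids lab m w b → T.anc v w := by
  classical
  obtain ⟨n, hn⟩ := T.reach b
  set P : ℕ → Prop := fun k => T.PathAvoids lab m (T.par^[k] b) b
  have hP0 : P 0 := pathAvoids_self b
  refine ⟨T.par^[Nat.findGreatest P n] b, ⟨_, rfl⟩,
    Nat.findGreatest_spec (Nat.zero_le n) hP0, fun w hw hwb => ?_⟩
  obtain ⟨k, hkn, rfl⟩ := exists_iterate_le_of_anc hn hw
  refine ⟨Nat.findGreatest P n - k, ?_⟩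
  rw [← iterate_add_apply, Nat.sub_add_cancel (Nat.le_findGreatest hkn hwb)]

end PhyloTree

section Nbr

variable {X M : Type}

theorem mem_nbr_self (ε : X → X → Set M) (m : M) (y : X) : y ∈ Nbr ε m y := Or.inr rfl

theorem mem_nbr_iff {ε : X → X → Set M} {m : M} {x y : X} (hxy : x ≠ y) :
    x ∈ Nbr ε m y ↔ m ∉ ε x y := by
  simp [Nbr, hxy]

end Nbr

namespace Explains

variable {V X M : Type} {T : PhyloTree V X} {lab : V → Set M} {ε : X → X → Set M}

theorem mem_iff_not_pathAvoids (hex : Explains T lab ε) {x y : X} (hxy : x ≠ y) (m : M)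
    {l : V} (hl : T.IsLca l (T.leaf x) (T.leaf y)) :
    m ∈ ε x y ↔ ¬T.PathAvoids lab m l (T.leaf y) := by
  rw [hex x y hxy m]
  constructor
  · rintro ⟨l', hl', u, hu, hmu⟩ hfree
    exact hfree u (hl'.unique T hl ▸ hu) hmu
  · intro hfree
    unfold PhyloTree.PathAvoids at hfree
    push Not at hfree
    exact ⟨l, hl, hfree⟩

theorem nbr_eq_cluster (hex : Explains T lab ε) {m : M} {y : X} {v : V}
    (hv : T.anc v (T.leaf y)) (hfree : T.PathAvoids lab m v (T.leaf y))
    (htop : ∀ w, T.anc w (T.leaf y) → T.PathAvoids lab m w (T.leaf y) → T.anc v w) :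
    Nbr ε m y = T.cluster v := by
  ext x
  rcases eq_or_ne x y with rfl | hxy
  · exact iff_of_true (mem_nbr_self ε m x) hv
  obtain ⟨l, hl⟩ := T.exists_isLca (T.leaf x) (T.leaf y)
  rw [mem_nbr_iff hxy, hex.mem_iff_not_pathAvoids hxy m hl, not_not]
  constructor
  · exact fun hl_free => T.anc_trans (htop l hl.2.1 hl_free) hl.1
  · exact fun hvx => hfree.mono (hl.2.2 v hvx hv) (T.anc_refl _)

theorem exists_nbr_eq_cluster (hex : Explains T lab ε) (m : M) (y : X) :
    ∃ v, Nbr ε m y = T.cluster v ∧ T.PathAvoids lab m v (T.leaf y) ∧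
      ∀ w, T.anc w (T.leaf y) → T.PathAvoids lab m w (T.leaf y) → T.anc v w := by
  obtain ⟨v, hv, hfree, htop⟩ := T.exists_top_pathAvoids lab m (T.leaf y)
  exact ⟨v, hex.nbr_eq_cluster hv hfree htop, hfree, htop⟩

theorem hLike_nbrSet (hex : Explains T lab ε) : HLike (NbrSet ε) := by
  refine T.hLike_clusterSet.mono ?_
  rintro _ ⟨m, y, rfl⟩
  obtain ⟨v, hv, -⟩ := hex.exists_nbr_eq_cluster m y
  exact ⟨v, hv⟩

/-- The top `m`-avoiding ancestor `v'` of `y'` lies below that `v` of `y`: otherwise the path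
from `v'` down to `y` would avoid `m`, as it runs through `v`. -/
theorem nbr_subset_of_mem (hex : Explains T lab ε) {m : M} {y y' : X}
    (hy' : y' ∈ Nbr ε m y) : Nbr ε m y' ⊆ Nbr ε m y := by
  obtain ⟨v, hv, hfree, htop⟩ := hex.exists_nbr_eq_cluster m y
  obtain ⟨v', hv', hfree', -⟩ := hex.exists_nbr_eq_cluster m y'
  have hvy : T.anc v (T.leaf y) := hv.subset (mem_nbr_self ε m y)
  have hvy' : T.anc v (T.leaf y') := hv.subset hy'
  have hv'y' : T.anc v' (T.leaf y') := hv'.subset (mem_nbr_self ε m y')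
  have hvv' : T.anc v v' := (T.anc_total hvy' hv'y').elim id fun hv'v =>
    htop v' (T.anc_trans hv'v hvy) ((hfree'.mono (T.anc_refl v') hvy').trans hfree hvy)
  rw [hv, hv']
  exact T.cluster_subset_cluster hvv'

theorem ineqCond (hex : Explains T lab ε) : IneqCond ε := by
  have : Finite X := @Finite.of_injective _ _ T.fin T.leaf T.leaf_inj
  exact fun m y y' hy' => Set.ncard_le_ncard (hex.nbr_subset_of_mem hy')

end Explains

structure IsHierarchy {X : Type} (H : Set (Set X)) : Prop where
  hLike : HLike H
  univ_mem : Set.univ ∈ H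
  singleton_mem : ∀ x, {x} ∈ H
  empty_not_mem : ∅ ∉ H

def hierarchyClosure {X : Type} (H : Set (Set X)) : Set (Set X) :=
  insert Set.univ (Set.range ({·})) ∪ H

theorem HLike.isHierarchy_hierarchyClosure {X : Type} [Nonempty X] {H : Set (Set X)}
    (h : HLike H) (hempty : ∅ ∉ H) : IsHierarchy (hierarchyClosure H) where
  hLike := by
    refine h.union_of_forall ?_
    rintro P (rfl | ⟨x, rfl⟩) Q
    · exact Or.inr (Or.inl (Set.univ_inter Q))
    · by_cases hx : x ∈ Q
      · exact Or.inl (Set.inter_eq_left.mpr (Set.singleton_subset_iff.mpr hx))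
      · exact Or.inr (Or.inr (Set.singleton_inter_eq_empty.mpr hx))
  univ_mem := Or.inl (Set.mem_insert _ _)
  singleton_mem x := Or.inl (Or.inr ⟨x, rfl⟩)
  empty_not_mem := by
    rintro ((h | ⟨x, h⟩) | h)
    · exact Set.empty_ne_univ h
    · exact Set.singleton_ne_empty x h
    · exact hempty h

namespace IsHierarchy

open Order

variable {X : Type} {H : Set (Set X)}

theorem nonempty (hH : IsHierarchy H) (S : H) : S.1.Nonempty :=
  Set.nonempty_iff_ne_empty.mpr fun h => hH.empty_not_mem (h ▸ S.2)

def leaf (hH : IsHierarchy H) (x : X) : H := ⟨{x}, hH.singleton_mem x⟩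

theorem leaf_le_iff (hH : IsHierarchy H) {x : X} {S : H} : hH.leaf x ≤ S ↔ x ∈ S.1 :=
  Set.singleton_subset_iff

theorem eq_leaf_of_le_leaf (hH : IsHierarchy H) {x : X} {S : H} (h : S ≤ hH.leaf x) :
    S = hH.leaf x :=
  Subtype.ext ((hH.nonempty S).subset_singleton_iff.mp h)

variable [Finite X]

/-- The members strictly containing `S` all contain a point of `S`, so they form a chain. -/
theorem exists_least_gt (hH : IsHierarchy H) (S : H) (hS : ¬IsMax S) :
    ∃ P : H, S < P ∧ ∀ Q : H, S < Q → P ≤ Q := by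
  obtain ⟨P, hP⟩ := (Set.toFinite {Q : H | S < Q}).exists_minimal (not_isMax_iff.mp hS)
  refine ⟨P, hP.1, fun Q hQ => ?_⟩
  obtain ⟨z, hz⟩ := hH.nonempty S
  have hSP : S.1 ⊆ P.1 := (hP.1 : S < P).le
  exact (hH.hLike.subset_or_subset P.2 Q.2 (hSP hz) (hQ.le hz)).elim id (hP.2 hQ)

open Classical in
@[reducible] noncomputable def succOrder (hH : IsHierarchy H) : SuccOrder H where
  succ S := if hS : IsMax S then S else (hH.exists_least_gt S hS).choose
  le_succ S := by
    split_ifs with hS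
    · exact le_rfl
    · exact (hH.exists_least_gt S hS).choose_spec.1.le
  max_of_succ_le {S} h := by
    split_ifs at h with hS
    · exact hS
    · exact absurd h (hH.exists_least_gt S hS).choose_spec.1.not_ge
  succ_le_of_lt {S Q} h := by
    split_ifs with hS
    · exact h.le
    · exact (hH.exists_least_gt S hS).choose_spec.2 Q h

theorem exists_mem_covBy (hH : IsHierarchy H) {v : H} (hv : ∀ x, hH.leaf x ≠ v) {x : X}
    (hx : x ∈ v.1) : ∃ c : H, x ∈ c.1 ∧ c ⋖ v := by
  obtain ⟨c, hxc, hcv⟩ := exists_le_covBy_of_lt (lt_of_le_of_ne (hH.leaf_le_iff.mpr hx) (hv x))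
  exact ⟨c, hH.leaf_le_iff.mp hxc, hcv⟩

theorem two_le_ncard_children (hH : IsHierarchy H) [SuccOrder H] {v : H}
    (hv : ¬∃ x, hH.leaf x = v) : 2 ≤ {u : H | succ u = v ∧ u ≠ v}.ncard := by
  push Not at hv
  obtain ⟨x₀, hx₀⟩ := hH.nonempty v
  obtain ⟨c₀, hxc₀, hc₀⟩ := hH.exists_mem_covBy hv hx₀
  obtain ⟨x₁, hx₁, hxc₁⟩ := Set.exists_of_ssubset hc₀.lt
  obtain ⟨c₁, hxc₁', hc₁⟩ := hH.exists_mem_covBy hv hx₁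
  refine (Set.one_lt_ncard_iff (Set.toFinite _)).mpr
    ⟨c₀, c₁, ⟨hc₀.succ_eq, hc₀.lt.ne⟩, ⟨hc₁.succ_eq, hc₁.lt.ne⟩, ?_⟩
  rintro rfl
  exact hxc₁ hxc₁'

noncomputable def toPhyloTree (hH : IsHierarchy H) : PhyloTree H X :=
  letI := hH.succOrder
  { fin := inferInstance
    root := ⟨Set.univ, hH.univ_mem⟩
    par := succ
    par_root := succ_eq_iff_isMax.mpr fun _ _ => Set.subset_univ _
    reach := fun v => exists_succ_iterate_of_le (Set.subset_univ v.1)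
    leaf := hH.leaf
    leaf_inj := fun _ _ h => Set.singleton_injective (congrArg Subtype.val h)
    leaf_isLeaf := fun _ u h => hH.eq_leaf_of_le_leaf (h ▸ le_succ u)
    leaf_only := fun v hv => by
      by_contra! hleaf
      obtain ⟨x, hx⟩ := hH.nonempty v
      obtain ⟨c, -, hcv⟩ := hH.exists_mem_covBy hleaf hx
      exact hcv.lt.ne (hv c hcv.succ_eq)
    root_deg := or_iff_not_imp_left.mpr hH.two_le_ncard_children
    inner_deg := fun _ _ => hH.two_le_ncard_children }

theorem anc_toPhyloTree (hH : IsHierarchy H) {S S' : H} : hH.toPhyloTree.anc S S' ↔ S' ≤ S :=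
  letI := hH.succOrder
  exists_succ_iterate_iff_le

theorem cluster_toPhyloTree (hH : IsHierarchy H) (S : H) : hH.toPhyloTree.cluster S = S.1 :=
  Set.ext fun _ => hH.anc_toPhyloTree.trans hH.leaf_le_iff

theorem clusterSet_toPhyloTree (hH : IsHierarchy H) : hH.toPhyloTree.clusterSet = H := by
  ext S
  simp only [PhyloTree.clusterSet, cluster_toPhyloTree, Set.mem_ofPred_eq]
  exact ⟨by rintro ⟨v, rfl⟩; exact v.2, fun hS => ⟨⟨S, hS⟩, rfl⟩⟩

end IsHierarchy

section Backward

variable {X M : Type} {ε : X → X → Set M}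

theorem empty_not_mem_nbrSet : ∅ ∉ NbrSet ε := by
  rintro ⟨m, y, h⟩
  exact (h ▸ mem_nbr_self ε m y : y ∈ (∅ : Set X))

theorem nbr_subset_of_mem_of_hLike [Finite X] (hl : HLike (NbrSet ε)) (hic : IneqCond ε)
    {m : M} {y z : X} (h : y ∈ Nbr ε m z) : Nbr ε m y ⊆ Nbr ε m z := by
  rcases hl.subset_or_subset ⟨m, y, rfl⟩ ⟨m, z, rfl⟩ (mem_nbr_self ε m y) h with h' | h'
  · exact h'
  · exact (Set.eq_of_subset_of_ncard_le h' (hic m z y h)).symm.subset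

theorem explains_of_nbr_mem_clusterSet {V : Type} (T : PhyloTree V X)
    (hmem : ∀ m y, Nbr ε m y ∈ T.clusterSet)
    (hsub : ∀ m y z, y ∈ Nbr ε m z → Nbr ε m y ⊆ Nbr ε m z) :
    Explains T (fun u => {m | ∃ z, Nbr ε m z = T.cluster u}) ε := by
  intro x y hxy m
  constructor
  · intro hm
    obtain ⟨l, hl⟩ := T.exists_isLca (T.leaf x) (T.leaf y)
    obtain ⟨v, hv⟩ := hmem m y
    have hxv : x ∉ T.cluster v := hv ▸ (mem_nbr_iff hxy).not.mpr (not_not.mpr hm)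
    have hvl : ¬T.anc v l := fun hvl => hxv (T.anc_trans hvl hl.1)
    refine ⟨l, hl, v, ⟨?_, fun h => hvl (h ▸ T.anc_refl l), hv.subset (mem_nbr_self ε m y)⟩,
      y, hv⟩
    exact (T.anc_total hl.2.1 (hv.subset (mem_nbr_self ε m y))).resolve_right hvl
  · rintro ⟨l, hl, u, ⟨hlu, hul, huy⟩, z, hz⟩
    by_contra hm
    have hxu : T.anc u (T.leaf x) :=
      (hz ▸ hsub m y z (hz ▸ huy)) ((mem_nbr_iff hxy).mpr hm)
    exact hul (T.anc_antisymm hlu (hl.2.2 u hxu huy)).symm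

theorem isFitchMap_of_hLike_of_ineqCond [Finite X] [Nonempty X] (hl : HLike (NbrSet ε))
    (hic : IneqCond ε) : IsFitchMap ε := by
  have hH := hl.isHierarchy_hierarchyClosure empty_not_mem_nbrSet
  refine ⟨_, hH.toPhyloTree, _, explains_of_nbr_mem_clusterSet _ (fun m y => ?_)
    fun m y z => nbr_subset_of_mem_of_hLike hl hic⟩
  rw [hH.clusterSet_toPhyloTree]
  exact Or.inr ⟨m, y, rfl⟩

end Backward

theorem fitch_iff_hlc_ic_general {X M : Type} [Fintype X] [Nonempty X]
    (ε : X → X → Set M) :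
    IsFitchMap ε ↔ HLike (NbrSet ε) ∧ IneqCond ε := by
  constructor
  · rintro ⟨V, T, lab, hex⟩
    exact ⟨hex.hLike_nbrSet, hex.ineqCond⟩
  · rintro ⟨hl, hic⟩
    exact isFitchMap_of_hLike_of_ineqCond hl hic

/-- `ε` is a Fitch map iff `N[ε]` is hierarchy-like (HLC) and `ε`
satisfies the inequality condition (IC). -/
theorem fitch_iff_hlc_ic {X M : Type} [Fintype X] [Fintype M] [Nonempty X] [Nonempty M]
    (ε : X → X → Set M) :
    IsFitchMap ε ↔ HLike (NbrSet ε) ∧ IneqCond ε :=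
  fitch_iff_hlc_ic_general ε
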